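/- Let A, B be positive definite n×n complex matrices and ν ∈ (0,1). Then for every nonnegative integer n₀, in the Loewner order, A !_ν B ≤ ( A^{−1}♯_ν B^{−1} + Σ_{k=0}^{n₀} r_k [ A^{−1}♯_{m_k/2^k} B^{−1} − 2 A^{−1}♯_{(2m_k+1)/2^{k+1}} B^{−1} + A^{−1}♯_{(m_k+1)/2^k} B^{−1} ] )^{−1} ≤ A♯_ν B, where A !_ν B = ((1−ν)A^{−1} + νB^{−1})^{−1} is the ν-weighted harmonic mean. -/

import Mathlib

open scoped ComplexOrder

/-- `r ν k`: the recursively defined coefficients, `r 0 = min {ν, 1-ν}`,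
`r k = min {2 r (k-1), 1 - 2 r (k-1)}`. -/
noncomputable def r (ν : ℝ) : ℕ → ℝ
  | 0 => min ν (1 - ν)
  | k + 1 => min (2 * r ν k) (1 - 2 * r ν k)

/-- `m ν k = ⌊2^k ν⌋`, as a real number. -/
noncomputable def m (ν : ℝ) (k : ℕ) : ℝ := ⌊2 ^ k * ν⌋

variable {d : ℕ}

/-- Real power of a matrix via the functional calculus: for a Hermitian matrix with spectral
decomposition `A = U diag(λᵢ) U*`, `mpow A t = U diag(λᵢ^t) U*` (real powers `Real.rpow` of the
eigenvalues); junk value `A` for non-Hermitian `A`. -/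
noncomputable def mpow (A : Matrix (Fin d) (Fin d) ℂ) (t : ℝ) : Matrix (Fin d) (Fin d) ℂ :=
  if hA : A.IsHermitian then
    (hA.eigenvectorUnitary : Matrix (Fin d) (Fin d) ℂ) *
      Matrix.diagonal (fun i => ((hA.eigenvalues i ^ t : ℝ) : ℂ)) *
      star (hA.eigenvectorUnitary : Matrix (Fin d) (Fin d) ℂ)
  else A

/-- The μ-weighted geometric mean `A♯_μ B = A^{1/2} (A^{-1/2} B A^{-1/2})^μ A^{1/2}`. -/
noncomputable def sharp (A B : Matrix (Fin d) (Fin d) ℂ) (μ : ℝ) : Matrix (Fin d) (Fin d) ℂ :=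
  mpow A (1 / 2) * mpow (mpow A (-(1 / 2)) * B * mpow A (-(1 / 2))) μ * mpow A (1 / 2)

/-- The μ-weighted harmonic mean `A !_μ B = ((1-μ)A⁻¹ + μB⁻¹)⁻¹`. -/
noncomputable def harm (A B : Matrix (Fin d) (Fin d) ℂ) (μ : ℝ) : Matrix (Fin d) (Fin d) ℂ :=
  ((1 - μ) • A⁻¹ + μ • B⁻¹)⁻¹

/-!
For `x > 0` every bracket `x^(m_k/2^k) - 2 x^((2m_k+1)/2^(k+1)) + x^((m_k+1)/2^k)` is the square
`(x^(m_k/2^(k+1)) - x^((m_k+1)/2^(k+1)))²`, and the scalar refinement of Young's inequality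
`x^ν + ∑_{k ≤ n} r_k (bracket_k) ≤ 1 - ν + ν x` holds by induction on `n`: writing `x = y²`, the
term `k = 0` is `r_0 (1 - y)²`, while the remaining terms are those of `2ν` at `y` when `ν < 1/2`,
and `y` times those of `2ν - 1` at `y` when `ν ≥ 1/2`.

With `X = A⁻¹`, `Y = B⁻¹` and `D = X^(-1/2) Y X^(-1/2)`, every matrix in the theorem is a
perspective `X^(1/2) f(D) X^(1/2)` or the inverse of one: `X ♯_t Y` for `f = x^t`,
`(1 - ν) X + ν Y` for `f = 1 - ν + ν x`, the middle term for the scalar function above, and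
`A ♯_ν B = (X ♯_ν Y)⁻¹`. The perspective is linear in `f`, and the inverse of a perspective is
order-reversing in `f` on positive functions, so the scalar inequalities on the spectrum of `D`
give the matrix ones.
-/

open Set

lemma r_mem_Icc {ν : ℝ} (hν : ν ∈ Icc 0 1) (k : ℕ) : r ν k ∈ Icc 0 (1 / 2) := by
  induction k with
  | zero =>
    refine ⟨le_min hν.1 (by linarith [hν.2]), ?_⟩
    rcases le_total ν (1 / 2) with h | h
    · exact (min_le_left _ _).trans h
    · exact (min_le_right _ _).trans (by linarith)
  | succ k ih =>
    refine ⟨le_min (by linarith [ih.1]) (by linarith [ih.2]), ?_⟩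
    rcases le_total (2 * r ν k) (1 / 2) with h | h
    · exact (min_le_left _ _).trans h
    · exact (min_le_right _ _).trans (by linarith)

lemma r_succ_of_le_half {ν : ℝ} (h : ν ≤ 1 / 2) (k : ℕ) : r ν (k + 1) = r (2 * ν) k := by
  induction k with
  | zero => simp only [r, min_eq_left (show ν ≤ 1 - ν by linarith)]
  | succ k ih => rw [r, ih, r]

lemma r_succ_of_half_le {ν : ℝ} (h : 1 / 2 ≤ ν) (k : ℕ) : r ν (k + 1) = r (2 * ν - 1) k := by
  induction k with
  | zero =>
    simp only [r, min_eq_right (show 1 - ν ≤ ν by linarith), min_comm (2 * (1 - ν))]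
    ring_nf
  | succ k ih => rw [r, ih, r]

lemma m_zero {ν : ℝ} (hν : ν ∈ Ico 0 1) : m ν 0 = 0 := by
  simp [m, Int.floor_eq_zero_iff.2 (by simpa using hν)]

lemma m_succ (ν : ℝ) (k : ℕ) : m ν (k + 1) = m (2 * ν) k := by
  rw [m, m, pow_succ, mul_assoc]

lemma m_succ_eq_two_pow_add (ν : ℝ) (k : ℕ) : m ν (k + 1) = 2 ^ k + m (2 * ν - 1) k := by
  have : (2 : ℝ) ^ (k + 1) * ν = 2 ^ k * (2 * ν - 1) + ((2 ^ k : ℤ) : ℝ) := by push_cast; ring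
  rw [m, m, this, Int.floor_add_intCast]
  push_cast
  ring

noncomputable def dyadicBracket (ν x : ℝ) (k : ℕ) : ℝ :=
  x ^ (m ν k / 2 ^ k) - 2 * x ^ ((2 * m ν k + 1) / 2 ^ (k + 1)) + x ^ ((m ν k + 1) / 2 ^ k)

lemma sq_rpow {y : ℝ} (hy : 0 ≤ y) (e : ℝ) : (y ^ 2) ^ e = y ^ (2 * e) := by
  rw [← Real.rpow_natCast, ← Real.rpow_mul hy, Nat.cast_ofNat]

lemma two_mul_div_two_pow_succ (a : ℝ) (j : ℕ) : 2 * (a / 2 ^ (j + 1)) = a / 2 ^ j := by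
  rw [pow_succ]; field_simp

lemma dyadicBracket_eq_sq {x : ℝ} (hx : 0 < x) (ν : ℝ) (k : ℕ) :
    dyadicBracket ν x k = (x ^ (m ν k / 2 ^ (k + 1)) - x ^ ((m ν k + 1) / 2 ^ (k + 1))) ^ 2 := by
  rw [dyadicBracket, sub_sq, Real.rpow_pow_comm hx.le, Real.rpow_pow_comm hx.le, sq_rpow hx.le,
    sq_rpow hx.le, mul_assoc, ← Real.rpow_add hx, two_mul_div_two_pow_succ,
    two_mul_div_two_pow_succ, ← add_div]
  ring_nf

lemma dyadicBracket_nonneg {x : ℝ} (hx : 0 < x) (ν : ℝ) (k : ℕ) : 0 ≤ dyadicBracket ν x k :=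
  dyadicBracket_eq_sq hx ν k ▸ sq_nonneg _

lemma dyadicBracket_sq_zero {ν y : ℝ} (hν : ν ∈ Ico 0 1) (hy : 0 ≤ y) :
    dyadicBracket ν (y ^ 2) 0 = (1 - y) ^ 2 := by
  simp only [dyadicBracket, m_zero hν, sq_rpow hy]
  norm_num
  ring

lemma dyadicBracket_sq_succ {y : ℝ} (hy : 0 ≤ y) (ν : ℝ) (k : ℕ) :
    dyadicBracket ν (y ^ 2) (k + 1) = dyadicBracket (2 * ν) y k := by
  simp only [dyadicBracket, m_succ, sq_rpow hy, two_mul_div_two_pow_succ]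

lemma dyadicBracket_sq_succ_eq_mul {y : ℝ} (hy : 0 < y) (ν : ℝ) (k : ℕ) :
    dyadicBracket ν (y ^ 2) (k + 1) = y * dyadicBracket (2 * ν - 1) y k := by
  set M := m (2 * ν - 1) k
  have h₁ : (2 ^ k + M) / 2 ^ k = 1 + M / 2 ^ k := by field_simp
  have h₂ : (2 * (2 ^ k + M) + 1) / 2 ^ (k + 1) = 1 + (2 * M + 1) / 2 ^ (k + 1) := by
    rw [pow_succ]; field_simp; ring
  have h₃ : (2 ^ k + M + 1) / 2 ^ k = 1 + (M + 1) / 2 ^ k := by field_simp; ring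
  rw [dyadicBracket, dyadicBracket, m_succ_eq_two_pow_add]
  simp only [sq_rpow hy.le, two_mul_div_two_pow_succ]
  rw [h₁, h₂, h₃]
  simp only [Real.rpow_add hy, Real.rpow_one]
  ring

theorem rpow_add_sum_dyadicBracket_le {ν x : ℝ} (hν : ν ∈ Ico 0 1) (hx : 0 < x) (n : ℕ) :
    x ^ ν + ∑ k ∈ Finset.range n, r ν k * dyadicBracket ν x k ≤ 1 - ν + ν * x := by
  induction n generalizing ν x with
  | zero =>
    simpa using Real.geom_mean_le_arith_mean2_weighted (sub_nonneg.2 hν.2.le) hν.1 zero_le_one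
      hx.le (sub_add_cancel 1 ν)
  | succ n ih =>
    obtain ⟨y, hy, rfl⟩ : ∃ y, 0 < y ∧ y ^ 2 = x := ⟨√x, Real.sqrt_pos.2 hx, Real.sq_sqrt hx.le⟩
    rw [Finset.sum_range_succ', dyadicBracket_sq_zero hν hy.le, sq_rpow hy.le]
    rcases lt_or_ge ν (1 / 2) with hlt | hge
    · have hr : r ν 0 = ν := min_eq_left (by linarith)
      have hrec := ih (ν := 2 * ν) ⟨by linarith [hν.1], by linarith⟩ hy
      simp only [r_succ_of_le_half hlt.le, dyadicBracket_sq_succ hy.le, hr]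
      linarith
    · have hr : r ν 0 = 1 - ν := min_eq_right (by linarith)
      have hrec := ih (ν := 2 * ν - 1) ⟨by linarith, by linarith [hν.2]⟩ hy
      have hpow : y ^ (2 * ν) = y * y ^ (2 * ν - 1) := by
        rw [← Real.rpow_one_add' hy.le (by linarith)]; ring_nf
      simp only [r_succ_of_half_le hge, dyadicBracket_sq_succ_eq_mul hy, hr, hpow,
        mul_left_comm _ y, ← Finset.mul_sum]
      linarith [mul_le_mul_of_nonneg_left hrec hy.le]

lemma sum_dyadicBracket_nonneg {ν x : ℝ} (hν : ν ∈ Icc 0 1) (hx : 0 < x) (n : ℕ) :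
    0 ≤ ∑ k ∈ Finset.range n, r ν k * dyadicBracket ν x k :=
  Finset.sum_nonneg fun k _ => mul_nonneg (r_mem_Icc hν k).1 (dyadicBracket_nonneg hx ν k)

open scoped MatrixOrder

namespace Matrix

variable {n 𝕜 : Type*} [RCLike 𝕜] [Fintype n] [DecidableEq n]

/-- Registered with `fun_prop`, this discharges the continuity side conditions of the `cfc` API
for matrices, whose spectrum is finite. -/
@[fun_prop]
lemma continuousOn_spectrum_real (A : Matrix n n 𝕜) (f : ℝ → ℝ) :
    ContinuousOn f (spectrum ℝ A) :=
  finite_real_spectrum.continuousOn f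

lemma inv_cfc (A : Matrix n n 𝕜) {f : ℝ → ℝ} (hf : ∀ x ∈ spectrum ℝ A, f x ≠ 0) :
    (cfc f A)⁻¹ = cfc (fun x => (f x)⁻¹) A := by
  by_cases hA : IsSelfAdjoint A
  · rw [nonsing_inv_eq_ringInverse, cfc_inv f A hf]
  · rw [cfc_apply_of_not_predicate A hA, cfc_apply_of_not_predicate A hA, inv_zero]

end Matrix

section mpow

variable {A B : Matrix (Fin d) (Fin d) ℂ}

lemma mpow_eq_cfc (hA : A.IsHermitian) (t : ℝ) : mpow A t = cfc (· ^ t : ℝ → ℝ) A := by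
  rw [hA.cfc_eq, mpow, dif_pos hA]
  rfl

lemma isHermitian_mpow (hA : A.IsHermitian) (t : ℝ) : (mpow A t).IsHermitian := by
  rw [mpow_eq_cfc hA]
  exact cfc_predicate _ A

lemma mpow_zero (hA : A.IsHermitian) : mpow A 0 = 1 := by
  simp only [mpow_eq_cfc hA, Real.rpow_zero]
  exact cfc_const_one ℝ A

lemma mpow_one (hA : A.IsHermitian) : mpow A 1 = A := by
  simp only [mpow_eq_cfc hA, Real.rpow_one, cfc_id' ℝ A]

lemma mpow_add (hA : A.PosDef) (s t : ℝ) : mpow A (s + t) = mpow A s * mpow A t := by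
  rw [mpow_eq_cfc hA.1, mpow_eq_cfc hA.1, mpow_eq_cfc hA.1, ← cfc_mul]
  exact cfc_congr fun x hx => Real.rpow_add (hA.isStrictlyPositive.spectrum_pos hx) s t

lemma mpow_neg (hA : A.PosDef) (t : ℝ) : mpow A (-t) = (mpow A t)⁻¹ := by
  refine (Matrix.inv_eq_left_inv ?_).symm
  rw [← mpow_add hA, neg_add_cancel, mpow_zero hA.1]

lemma mpow_inv (hA : A.PosDef) (t : ℝ) : mpow A⁻¹ t = mpow A (-t) := by
  have hinv : A⁻¹ = cfc (· ^ (-1 : ℝ) : ℝ → ℝ) A := by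
    rw [← mpow_eq_cfc hA.1, mpow_neg hA, mpow_one hA.1]
  rw [mpow_eq_cfc hA.inv.1, mpow_eq_cfc hA.1, hinv,
    ← cfc_comp _ _ A hA.1.isSelfAdjoint ((Matrix.finite_real_spectrum.image _).continuousOn _)]
  refine cfc_congr fun x hx => ?_
  rw [Function.comp_apply, ← Real.rpow_mul (hA.isStrictlyPositive.spectrum_pos hx).le, neg_one_mul]

lemma posDef_mpow_mul_mul_mpow (hA : A.PosDef) (hB : B.PosDef) (t : ℝ) :
    (mpow A t * B * mpow A t).PosDef := by
  have hunit : IsUnit (mpow A t) := IsUnit.of_mul_eq_one (mpow A (-t)) (by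
    rw [← mpow_add hA, add_neg_cancel, mpow_zero hA.1])
  have := (Matrix.IsUnit.posDef_star_left_conjugate_iff hunit).2 hB
  rwa [Matrix.star_eq_conjTranspose, (isHermitian_mpow hA.1 t).eq] at this

lemma isHermitian_mpow_mul_mul_mpow (hA : A.IsHermitian) (hB : B.IsHermitian) (t : ℝ) :
    (mpow A t * B * mpow A t).IsHermitian := by
  have := Matrix.isHermitian_mul_mul_conjTranspose (mpow A t) hB
  rwa [(isHermitian_mpow hA t).eq] at this

end mpow

section perspective

variable {X Y : Matrix (Fin d) (Fin d) ℂ}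

noncomputable def perspective (X Y : Matrix (Fin d) (Fin d) ℂ) :
    (ℝ → ℝ) →ₗ[ℝ] Matrix (Fin d) (Fin d) ℂ where
  toFun f := mpow X (1 / 2) * cfc f (mpow X (-(1 / 2)) * Y * mpow X (-(1 / 2))) * mpow X (1 / 2)
  map_add' f g := by
    rw [show f + g = fun x => f x + g x from rfl, cfc_add, Matrix.mul_add, Matrix.add_mul]
  map_smul' c f := by
    rw [show c • f = fun x => c • f x from rfl, cfc_smul, Matrix.mul_smul, Matrix.smul_mul]
    rfl

lemma perspective_apply (X Y : Matrix (Fin d) (Fin d) ℂ) (f : ℝ → ℝ) :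
    perspective X Y f =
      mpow X (1 / 2) * cfc f (mpow X (-(1 / 2)) * Y * mpow X (-(1 / 2))) * mpow X (1 / 2) :=
  rfl

lemma sharp_eq_perspective (hX : X.IsHermitian) (hY : Y.IsHermitian) (t : ℝ) :
    sharp X Y t = perspective X Y (· ^ t) := by
  rw [sharp, mpow_eq_cfc (isHermitian_mpow_mul_mul_mpow hX hY _), perspective_apply]

lemma sharp_zero (hX : X.PosDef) (hY : Y.IsHermitian) : sharp X Y 0 = X := by
  rw [sharp, mpow_zero (isHermitian_mpow_mul_mul_mpow hX.1 hY _), Matrix.mul_one, ← mpow_add hX,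
    add_halves, mpow_one hX.1]

lemma sharp_one (hX : X.PosDef) (hY : Y.IsHermitian) : sharp X Y 1 = Y := by
  have h₁ : mpow X (1 / 2) * mpow X (-(1 / 2)) = 1 := by
    rw [← mpow_add hX, add_neg_cancel, mpow_zero hX.1]
  have h₂ : mpow X (-(1 / 2)) * mpow X (1 / 2) = 1 := by
    rw [← mpow_add hX, neg_add_cancel, mpow_zero hX.1]
  rw [sharp, mpow_one (isHermitian_mpow_mul_mul_mpow hX.1 hY _), ← Matrix.mul_assoc,
    ← Matrix.mul_assoc, h₁, Matrix.one_mul, Matrix.mul_assoc, h₂, Matrix.mul_one]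

lemma smul_add_smul_eq_perspective (hX : X.PosDef) (hY : Y.IsHermitian) (ν : ℝ) :
    (1 - ν) • X + ν • Y = perspective X Y (fun x => 1 - ν + ν * x) := by
  have hf : (fun x : ℝ => 1 - ν + ν * x) = (1 - ν) • (· ^ (0 : ℝ)) + ν • (· ^ (1 : ℝ)) := by
    funext x
    simp
  rw [hf, map_add, map_smul, map_smul, ← sharp_eq_perspective hX.1 hY,
    ← sharp_eq_perspective hX.1 hY, sharp_zero hX hY, sharp_one hX hY]

lemma sharp_add_sum_dyadic_eq_perspective (hX : X.IsHermitian) (hY : Y.IsHermitian) (ν : ℝ)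
    (n : ℕ) :
    sharp X Y ν + ∑ k ∈ Finset.range n, r ν k •
        (sharp X Y (m ν k / 2 ^ k) - (2 : ℝ) • sharp X Y ((2 * m ν k + 1) / 2 ^ (k + 1)) +
          sharp X Y ((m ν k + 1) / 2 ^ k)) =
      perspective X Y (fun x => x ^ ν + ∑ k ∈ Finset.range n, r ν k * dyadicBracket ν x k) := by
  simp only [sharp_eq_perspective hX hY, ← map_smul, ← map_sub, ← map_add, ← map_sum]
  congr 1
  funext x
  simp only [Pi.add_apply, Finset.sum_apply, Pi.smul_apply, Pi.sub_apply, smul_eq_mul,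
    dyadicBracket]

lemma sharp_eq_inv_sharp_inv_inv (hX : X.PosDef) (hY : Y.PosDef) (t : ℝ) :
    sharp X Y t = (sharp X⁻¹ Y⁻¹ t)⁻¹ := by
  have hD := posDef_mpow_mul_mul_mpow hX hY.inv (1 / 2)
  have hT : (mpow X (-(1 / 2)))⁻¹ = mpow X (1 / 2) := by rw [← mpow_neg hX, neg_neg]
  have hYY : Y⁻¹⁻¹ = Y := Matrix.nonsing_inv_nonsing_inv Y hY.det_pos.ne'.isUnit
  have hS : (mpow X (1 / 2))⁻¹ = mpow X (-(1 / 2)) := (mpow_neg hX _).symm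
  rw [sharp, sharp, mpow_inv hX, mpow_inv hX, neg_neg, Matrix.mul_inv_rev, Matrix.mul_inv_rev, hT,
    ← mpow_neg hD, ← mpow_inv hD, Matrix.mul_inv_rev, Matrix.mul_inv_rev, hS, hYY]
  simp only [Matrix.mul_assoc]

lemma inv_perspective_le_inv_perspective (hX : X.IsHermitian) {f g : ℝ → ℝ}
    (hf : ∀ x ∈ spectrum ℝ (mpow X (-(1 / 2)) * Y * mpow X (-(1 / 2))), 0 < f x)
    (hfg : ∀ x ∈ spectrum ℝ (mpow X (-(1 / 2)) * Y * mpow X (-(1 / 2))), f x ≤ g x) :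
    (perspective X Y g)⁻¹ ≤ (perspective X Y f)⁻¹ := by
  set D := mpow X (-(1 / 2)) * Y * mpow X (-(1 / 2))
  have hg : ∀ x ∈ spectrum ℝ D, g x ≠ 0 := fun x hx => ((hf x hx).trans_le (hfg x hx)).ne'
  rw [perspective_apply, perspective_apply, Matrix.mul_inv_rev, Matrix.mul_inv_rev,
    Matrix.mul_inv_rev, Matrix.mul_inv_rev, D.inv_cfc hg, D.inv_cfc fun x hx => (hf x hx).ne',
    ← Matrix.mul_assoc, ← Matrix.mul_assoc]
  exact (isHermitian_mpow hX _).inv.isSelfAdjoint.conjugate_le_conjugate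
    (cfc_mono (fun x hx => inv_anti₀ (hf x hx) (hfg x hx)) (D.continuousOn_spectrum_real _)
      (D.continuousOn_spectrum_real _))

end perspective

theorem stmt12 (A B : Matrix (Fin d) (Fin d) ℂ) (hA : A.PosDef) (hB : B.PosDef)
    (ν : ℝ) (hν : ν ∈ Set.Ioo (0 : ℝ) 1) (n₀ : ℕ) :
    ((sharp A⁻¹ B⁻¹ ν + ∑ k ∈ Finset.range (n₀ + 1), r ν k •
        (sharp A⁻¹ B⁻¹ (m ν k / 2 ^ k) -
          (2 : ℝ) • sharp A⁻¹ B⁻¹ ((2 * m ν k + 1) / 2 ^ (k + 1)) +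
          sharp A⁻¹ B⁻¹ ((m ν k + 1) / 2 ^ k)))⁻¹ - harm A B ν).PosSemidef ∧
    (sharp A B ν -
      (sharp A⁻¹ B⁻¹ ν + ∑ k ∈ Finset.range (n₀ + 1), r ν k •
        (sharp A⁻¹ B⁻¹ (m ν k / 2 ^ k) -
          (2 : ℝ) • sharp A⁻¹ B⁻¹ ((2 * m ν k + 1) / 2 ^ (k + 1)) +
          sharp A⁻¹ B⁻¹ ((m ν k + 1) / 2 ^ k)))⁻¹).PosSemidef := by
  have hspec : ∀ x ∈ spectrum ℝ (mpow A⁻¹ (-(1 / 2)) * B⁻¹ * mpow A⁻¹ (-(1 / 2))), 0 < x :=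
    fun x hx => (posDef_mpow_mul_mul_mpow hA.inv hB.inv _).isStrictlyPositive.spectrum_pos hx
  have hlower (x : ℝ) (hx : 0 < x) :
      x ^ ν ≤ x ^ ν + ∑ k ∈ Finset.range (n₀ + 1), r ν k * dyadicBracket ν x k :=
    le_add_of_nonneg_right (sum_dyadicBracket_nonneg (Set.Ioo_subset_Icc_self hν) hx _)
  rw [sharp_add_sum_dyadic_eq_perspective hA.inv.1 hB.inv.1, harm,
    smul_add_smul_eq_perspective hA.inv hB.inv.1, sharp_eq_inv_sharp_inv_inv hA hB,
    sharp_eq_perspective hA.inv.1 hB.inv.1]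
  exact ⟨inv_perspective_le_inv_perspective hA.inv.1
      (fun x hx => (Real.rpow_pos_of_pos (hspec x hx) ν).trans_le (hlower x (hspec x hx)))
      (fun x hx => rpow_add_sum_dyadicBracket_le (Set.Ioo_subset_Ico_self hν) (hspec x hx) _),
    inv_perspective_le_inv_perspective hA.inv.1
      (fun x hx => Real.rpow_pos_of_pos (hspec x hx) ν) (fun x hx => hlower x (hspec x hx))⟩
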